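/- For every ε ∈ (0, 1) there exist constants c > 0, C > 0 and τ₀ > 0 such that |Q(τ^{−1/3}·ζ)| ≤ C·e^{−c·τ^{−2/3}} for all 0 < τ < τ₀ and all ζ ∈ ℂ with Re(ζ²) ≥ 1 − ε and Re ζ < 0. -/

import Mathlib

open MeasureTheory Filter Topology

noncomputable section

/-- Q(ξ) = −(1/π) ∫ℝ log(1 − e^{−ξ²/2} e^{−t²/2})/(i·t − ξ) dt. -/
def Qf (ξ : ℂ) : ℂ :=
  -(1 / (Real.pi : ℂ)) *
    ∫ t : ℝ, Complex.log (1 - Complex.exp (-ξ ^ 2 / 2) * Complex.exp (-((t : ℂ) ^ 2) / 2)) /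
      (Complex.I * (t : ℂ) - ξ)

/-! Once `Re(ξ²) ≥ 2`, the number `w = e^{-ξ²/2}` has modulus at most `1/2`, so the logarithm in
the integrand of `Q(ξ)` is bounded by `(3/2)|w| e^{-t²/2}`, while the denominator `|it - ξ|` is at
least `|Re ξ| ≥ 1`. Integrating the Gaussian gives `|Q(ξ)| ≤ (3/√(2π)) e^{-Re(ξ²)/2}`, and for
`ξ = τ^{-1/3} ζ` one has `Re(ξ²) = τ^{-2/3} Re(ζ²) ≥ (1 - ε) τ^{-2/3}`. -/

open Complex

lemma norm_exp_neg_sq_div_two (ξ : ℂ) : ‖exp (-ξ ^ 2 / 2)‖ = Real.exp (-(ξ ^ 2).re / 2) := by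
  rw [norm_exp]
  congr 1
  simp

lemma re_sq_le_sq_re (ξ : ℂ) : (ξ ^ 2).re ≤ ξ.re ^ 2 := by
  simp only [sq, mul_re]
  nlinarith [mul_self_nonneg ξ.im]

lemma abs_re_le_norm_I_mul_sub (ξ : ℂ) (t : ℝ) : |ξ.re| ≤ ‖I * t - ξ‖ := by
  simpa using abs_re_le_norm (I * t - ξ)

lemma norm_Qf_integrand_le {ξ : ℂ} (hre : ξ.re < 0) (hw : ‖exp (-ξ ^ 2 / 2)‖ ≤ 1 / 2) (t : ℝ) :
    ‖log (1 - exp (-ξ ^ 2 / 2) * exp (-((t : ℂ) ^ 2) / 2)) / (I * t - ξ)‖ ≤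
      3 / 2 * ‖exp (-ξ ^ 2 / 2)‖ / (-ξ.re) * Real.exp (-(1 / 2) * t ^ 2) := by
  set w := exp (-ξ ^ 2 / 2)
  have hgauss : ‖exp (-((t : ℂ) ^ 2) / 2)‖ = Real.exp (-(1 / 2) * t ^ 2) := by
    rw [norm_exp_neg_sq_div_two, ← ofReal_pow, ofReal_re]
    ring_nf
  have hgauss_le : Real.exp (-(1 / 2) * t ^ 2) ≤ 1 :=
    Real.exp_le_one_iff.mpr (by nlinarith [sq_nonneg t])
  have hz : ‖w * exp (-((t : ℂ) ^ 2) / 2)‖ = ‖w‖ * Real.exp (-(1 / 2) * t ^ 2) := by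
    rw [norm_mul, hgauss]
  have hz_half : ‖-(w * exp (-((t : ℂ) ^ 2) / 2))‖ ≤ 1 / 2 := by
    rw [norm_neg, hz]
    nlinarith [norm_nonneg w, Real.exp_nonneg (-(1 / 2) * t ^ 2)]
  have hlog : ‖log (1 - w * exp (-((t : ℂ) ^ 2) / 2))‖ ≤
      3 / 2 * (‖w‖ * Real.exp (-(1 / 2) * t ^ 2)) := by
    have := norm_log_one_add_half_le_self hz_half
    rwa [norm_neg, hz, ← sub_eq_add_neg] at this
  have hden : -ξ.re ≤ ‖I * t - ξ‖ := abs_of_neg hre ▸ abs_re_le_norm_I_mul_sub ξ t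
  rw [norm_div, div_mul_eq_mul_div, div_le_div_iff₀ ((neg_pos.mpr hre).trans_le hden)
    (neg_pos.mpr hre)]
  calc ‖log (1 - w * exp (-((t : ℂ) ^ 2) / 2))‖ * -ξ.re
      ≤ 3 / 2 * (‖w‖ * Real.exp (-(1 / 2) * t ^ 2)) * -ξ.re := by gcongr; linarith
    _ ≤ 3 / 2 * (‖w‖ * Real.exp (-(1 / 2) * t ^ 2)) * ‖I * t - ξ‖ := by gcongr
    _ = 3 / 2 * ‖w‖ * Real.exp (-(1 / 2) * t ^ 2) * ‖I * t - ξ‖ := by ring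

lemma norm_Qf_le {ξ : ℂ} (hre : ξ.re < 0) (hw : ‖exp (-ξ ^ 2 / 2)‖ ≤ 1 / 2) :
    ‖Qf ξ‖ ≤ 3 / √(2 * Real.pi) * ‖exp (-ξ ^ 2 / 2)‖ / (-ξ.re) := by
  set K := 3 / 2 * ‖exp (-ξ ^ 2 / 2)‖ / (-ξ.re)
  have hint : ‖∫ t : ℝ, log (1 - exp (-ξ ^ 2 / 2) * exp (-((t : ℂ) ^ 2) / 2)) / (I * t - ξ)‖ ≤
      K * √(Real.pi / (1 / 2)) := by
    rw [← integral_gaussian, ← integral_const_mul]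
    exact norm_integral_le_of_norm_le
      ((integrable_exp_neg_mul_sq (by norm_num)).const_mul K)
      (Eventually.of_forall (norm_Qf_integrand_le hre hw))
  have hπ : ‖-(1 / (Real.pi : ℂ))‖ = 1 / Real.pi := by
    simp [abs_of_pos Real.pi_pos]
  calc ‖Qf ξ‖ ≤ 1 / Real.pi * (K * √(Real.pi / (1 / 2))) := by
        rw [Qf, norm_mul, hπ]
        gcongr
    _ = 1 / Real.pi * (3 / 2) * √(2 * Real.pi) * ‖exp (-ξ ^ 2 / 2)‖ / (-ξ.re) := by
        rw [show Real.pi / (1 / 2) = 2 * Real.pi by ring]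
        ring
    _ = 3 / √(2 * Real.pi) * ‖exp (-ξ ^ 2 / 2)‖ / (-ξ.re) := by
        have : 0 < √(2 * Real.pi) := by positivity
        congr 2
        field_simp
        rw [Real.sq_sqrt (by positivity)]

lemma norm_Qf_le_of_two_le_re_sq {ξ : ℂ} (hre : ξ.re < 0) (h2 : 2 ≤ (ξ ^ 2).re) :
    ‖Qf ξ‖ ≤ 3 / √(2 * Real.pi) * Real.exp (-(ξ ^ 2).re / 2) := by
  have hw : ‖exp (-ξ ^ 2 / 2)‖ ≤ 1 / 2 := by
    rw [norm_exp_neg_sq_div_two]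
    calc Real.exp (-(ξ ^ 2).re / 2) ≤ Real.exp (-1) := Real.exp_le_exp.mpr (by linarith)
      _ ≤ 1 / 2 := Real.exp_neg_one_lt_half.le
  have hre_one : 1 ≤ -ξ.re := by nlinarith [re_sq_le_sq_re ξ]
  calc ‖Qf ξ‖ ≤ 3 / √(2 * Real.pi) * ‖exp (-ξ ^ 2 / 2)‖ / (-ξ.re) := norm_Qf_le hre hw
    _ ≤ 3 / √(2 * Real.pi) * ‖exp (-ξ ^ 2 / 2)‖ := div_le_self (by positivity) hre_one
    _ = 3 / √(2 * Real.pi) * Real.exp (-(ξ ^ 2).re / 2) := by rw [norm_exp_neg_sq_div_two]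

theorem statement14_general (ε : ℝ) (hε1 : ε < 1) :
    ∃ c > (0 : ℝ), ∃ C > (0 : ℝ), ∃ τ₀ > (0 : ℝ), ∀ τ : ℝ, 0 < τ → τ < τ₀ →
      ∀ ζ : ℂ, 1 - ε ≤ (ζ ^ 2).re → ζ.re < 0 →
        ‖Qf (((τ ^ (-(1 : ℝ) / 3) : ℝ) : ℂ) * ζ)‖ ≤
          C * Real.exp (-c * τ ^ (-(2 : ℝ) / 3)) := by
  have hε : 0 < 1 - ε := by linarith
  obtain ⟨τ₀, hτ₀, hlarge⟩ : ∃ τ₀ > 0, ∀ τ ∈ Set.Ioo 0 τ₀, 2 ≤ (1 - ε) * τ ^ (-(2 : ℝ) / 3) :=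
    (nhdsGT_basis (0 : ℝ)).eventually_iff.mp
      (((tendsto_rpow_neg_nhdsGT_zero (by norm_num)).const_mul_atTop hε).eventually_ge_atTop 2)
  refine ⟨(1 - ε) / 2, by positivity, 3 / √(2 * Real.pi), by positivity, τ₀, hτ₀,
    fun τ hτ hττ₀ ζ hζ hζre => ?_⟩
  set u := τ ^ (-(1 : ℝ) / 3)
  have hu : 0 < u := Real.rpow_pos_of_pos hτ _
  have hu_sq : u ^ 2 = τ ^ (-(2 : ℝ) / 3) := by
    rw [← Real.rpow_natCast, ← Real.rpow_mul hτ.le]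
    norm_num
  have hsq : (((u : ℂ) * ζ) ^ 2).re = τ ^ (-(2 : ℝ) / 3) * (ζ ^ 2).re := by
    rw [mul_pow, ← ofReal_pow, re_ofReal_mul, hu_sq]
  have hre : ((u : ℂ) * ζ).re < 0 := by
    rw [re_ofReal_mul]
    exact mul_neg_of_pos_of_neg hu hζre
  have hbound := hlarge τ ⟨hτ, hττ₀⟩
  have hτpos : 0 ≤ τ ^ (-(2 : ℝ) / 3) := by positivity
  calc ‖Qf ((u : ℂ) * ζ)‖ ≤ 3 / √(2 * Real.pi) * Real.exp (-(((u : ℂ) * ζ) ^ 2).re / 2) :=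
        norm_Qf_le_of_two_le_re_sq hre (by rw [hsq]; nlinarith)
    _ ≤ 3 / √(2 * Real.pi) * Real.exp (-((1 - ε) / 2) * τ ^ (-(2 : ℝ) / 3)) := by
        gcongr
        rw [hsq]
        nlinarith

theorem statement14 (ε : ℝ) (hε0 : 0 < ε) (hε1 : ε < 1) :
    ∃ c > (0 : ℝ), ∃ C > (0 : ℝ), ∃ τ₀ > (0 : ℝ), ∀ τ : ℝ, 0 < τ → τ < τ₀ →
      ∀ ζ : ℂ, 1 - ε ≤ (ζ ^ 2).re → ζ.re < 0 →
        ‖Qf (((τ ^ (-(1 : ℝ) / 3) : ℝ) : ℂ) * ζ)‖ ≤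
          C * Real.exp (-c * τ ^ (-(2 : ℝ) / 3)) :=
  statement14_general ε hε1
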